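/- (Performance difference lemma, visitation form.) For any two policies π and π′, J(π′) − J(π) = (1/(1−γ)) · E_{s ~ ν^{π′,μ}} E_{a ~ π′(s)} [A^π(s,a)], where the outer expectation is the sum over s ∈ S of ν^{π′,μ}(s) times the inner expectation. -/

import Mathlib

open scoped BigOperators

section MDPDefs

variable {S A : Type*} [Fintype S] [Fintype A]

/-- Expectation of a real-valued function under a PMF on a finite type (a finite sum). -/
noncomputable def pmfExp {X : Type*} [Fintype X] (p : PMF X) (f : X → ℝ) : ℝ :=
  ∑ x, (p x).toReal * f x

/-- Time-`t` state distribution `d_t^{π,μ}`: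
`d_0 = μ` and `d_{t+1}` is obtained by sampling `x ~ d_t`, `a ~ π x`, `s' ~ P x a`. -/
noncomputable def stateDist (P : S → A → PMF S) (π : S → PMF A) (μ : PMF S) : ℕ → PMF S
  | 0 => μ
  | t + 1 => (stateDist P π μ t).bind fun x => (π x).bind fun a => P x a

/-- State value function `V^π(s) = Σ_t γ^t E_{x ~ d_t^{π, δ_s}} E_{a ~ π x}[r x a]`. -/
noncomputable def Vval (P : S → A → PMF S) (r : S → A → ℝ) (γ : ℝ) (π : S → PMF A) (s : S) : ℝ :=
  ∑' t : ℕ, γ ^ t * pmfExp (stateDist P π (PMF.pure s) t) fun x => pmfExp (π x) fun a => r x a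

/-- Return from an initial distribution: `J(π) = E_{s~μ}[V^π(s)]`. -/
noncomputable def Jret (P : S → A → PMF S) (r : S → A → ℝ) (γ : ℝ) (π : S → PMF A) (μ : PMF S) : ℝ :=
  pmfExp μ (Vval P r γ π)

/-- State-action value `Q^π(s,a) = r(s,a) + γ E_{s' ~ P s a}[V^π(s')]`. -/
noncomputable def Qval (P : S → A → PMF S) (r : S → A → ℝ) (γ : ℝ) (π : S → PMF A)
    (s : S) (a : A) : ℝ :=
  r s a + γ * pmfExp (P s a) (Vval P r γ π)

/-- Advantage `A^π(s,a) = Q^π(s,a) - V^π(s)`. -/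
noncomputable def Adv (P : S → A → PMF S) (r : S → A → ℝ) (γ : ℝ) (π : S → PMF A)
    (s : S) (a : A) : ℝ :=
  Qval P r γ π s a - Vval P r γ π s

/-- Discounted state-visitation distribution `ν^{π,μ}(s) = (1-γ) Σ_t γ^t d_t^{π,μ}(s)`. -/
noncomputable def visit (P : S → A → PMF S) (π : S → PMF A) (μ : PMF S) (γ : ℝ) (s : S) : ℝ :=
  (1 - γ) * ∑' t : ℕ, γ ^ t * (stateDist P π μ t s).toReal

/-- `ℓ¹` distance between two PMFs on a finite type. -/
noncomputable def l1Dist {X : Type*} [Fintype X] (p q : PMF X) : ℝ :=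
  ∑ x, |(p x).toReal - (q x).toReal|

/-- KL divergence `D_KL(p‖q) = Σ_{x : p x > 0} p x * log (p x / q x)` on a finite type. -/
noncomputable def pmfKL {X : Type*} [Fintype X] (p q : PMF X) : ℝ :=
  ∑ x, if p x = 0 then 0 else (p x).toReal * Real.log ((p x).toReal / (q x).toReal)

/-- Mixed behavior policy: teacher's action when the intervention indicator is on,
student's action otherwise. -/
noncomputable def mixPolicy {S A : Type*} (πt πs : S → PMF A) (T : S → Bool) (s : S) : PMF A :=
  if T s then πt s else πs s

/-- Finite-horizon value of a deterministic policy, defined recursively: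
`V_0(s) = r s (σ s)` and `V_{k+1}(s) = r s (σ s) + γ E_{s' ~ P s (σ s)}[V_k s']`. -/
noncomputable def Vfin (P : S → A → PMF S) (r : S → A → ℝ) (γ : ℝ) (σ : S → A) : ℕ → S → ℝ
  | 0, s => r s (σ s)
  | k + 1, s => r s (σ s) + γ * pmfExp (P s (σ s)) (Vfin P r γ σ k)

/-- Finite-horizon value of the switching (mixed) policy that at each step picks whichever of
the two deterministic policies gives the larger continuation value. -/
noncomputable def Wswitch (P : S → A → PMF S) (r : S → A → ℝ) (γ : ℝ)
    (πt πs : S → A) : ℕ → S → ℝ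
  | 0, s => max (r s (πt s)) (r s (πs s))
  | k + 1, s =>
      max (r s (πt s) + γ * pmfExp (P s (πt s)) (Wswitch P r γ πt πs k))
          (r s (πs s) + γ * pmfExp (P s (πs s)) (Wswitch P r γ πt πs k))

end MDPDefs


/-!
Write `V = V^π` and let `d_t` be the state distribution of `π'`. Averaging the advantage of `π`
over `d_t` and `π'` gives `E_{d_t}[r_{π'}] + γ E_{d_{t+1}}[V] - E_{d_t}[V]`, because `d_{t+1}` is
one `π'`-step from `d_t`. Summing with weights `γ^t`, the `V`-terms telescope to `-E_μ[V] = -J(π)`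
while the reward terms add up to `J(π')`; the weighted sum over `t` is the visitation average
up to the factor `1 - γ`.
-/

section Expectation

variable {X : Type*} [Fintype X]

lemma PMF.sum_toReal_eq_one (p : PMF X) : ∑ x, (p x).toReal = 1 := by
  rw [← ENNReal.toReal_sum fun x _ => p.apply_ne_top x, ← tsum_fintype (L := .unconditional _),
    p.tsum_coe, ENNReal.toReal_one]

lemma PMF.toReal_apply_le_one {Y : Type*} (p : PMF Y) (y : Y) : (p y).toReal ≤ 1 :=
  ENNReal.toReal_le_of_le_ofReal zero_le_one (by simpa using p.coe_le_one y)

lemma pmfExp_const (p : PMF X) (c : ℝ) : pmfExp p (fun _ => c) = c := by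
  simp [pmfExp, ← Finset.sum_mul, p.sum_toReal_eq_one]

lemma pmfExp_add (p : PMF X) (f g : X → ℝ) :
    pmfExp p (fun x => f x + g x) = pmfExp p f + pmfExp p g := by
  simp [pmfExp, mul_add, Finset.sum_add_distrib]

lemma pmfExp_sub (p : PMF X) (f g : X → ℝ) :
    pmfExp p (fun x => f x - g x) = pmfExp p f - pmfExp p g := by
  simp [pmfExp, mul_sub, Finset.sum_sub_distrib]

lemma pmfExp_const_mul (p : PMF X) (c : ℝ) (f : X → ℝ) :
    pmfExp p (fun x => c * f x) = c * pmfExp p f := by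
  simp [pmfExp, Finset.mul_sum, mul_left_comm]

lemma abs_pmfExp_le (p : PMF X) (f : X → ℝ) : |pmfExp p f| ≤ ∑ x, |f x| := by
  refine (Finset.abs_sum_le_sum_abs _ _).trans (Finset.sum_le_sum fun x _ => ?_)
  rw [abs_mul, abs_of_nonneg ENNReal.toReal_nonneg]
  exact mul_le_of_le_one_left (abs_nonneg _) (p.toReal_apply_le_one x)

lemma PMF.toReal_bind_apply {Y : Type*} (p : PMF X) (q : X → PMF Y) (y : Y) :
    (p.bind q y).toReal = ∑ x, (p x).toReal * (q x y).toReal := by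
  rw [PMF.bind_apply, tsum_fintype,
    ENNReal.toReal_sum fun x _ => ENNReal.mul_ne_top (p.apply_ne_top x) ((q x).apply_ne_top y)]
  exact Finset.sum_congr rfl fun x _ => ENNReal.toReal_mul

lemma pmfExp_bind {Y : Type*} [Fintype Y] (p : PMF X) (q : X → PMF Y) (f : Y → ℝ) :
    pmfExp (p.bind q) f = pmfExp p (fun x => pmfExp (q x) f) := by
  simp only [pmfExp, PMF.toReal_bind_apply, Finset.sum_mul, Finset.mul_sum, mul_assoc]
  exact Finset.sum_comm

end Expectation

section Series

variable {γ : ℝ}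

lemma summable_geometric_mul_of_abs_le (hγ0 : 0 ≤ γ) (hγ1 : γ < 1) {c : ℕ → ℝ} {C : ℝ}
    (hc : ∀ t, |c t| ≤ C) : Summable fun t => γ ^ t * c t := by
  refine .of_norm_bounded ((summable_geometric_of_lt_one hγ0 hγ1).mul_left C) fun t => ?_
  rw [Real.norm_eq_abs, abs_mul, abs_pow, abs_of_nonneg hγ0, mul_comm]
  exact mul_le_mul_of_nonneg_right (hc t) (pow_nonneg hγ0 t)

lemma summable_geometric_mul_pmfExp {X : Type*} [Fintype X] (hγ0 : 0 ≤ γ) (hγ1 : γ < 1)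
    (d : ℕ → PMF X) (f : X → ℝ) : Summable fun t => γ ^ t * pmfExp (d t) f :=
  summable_geometric_mul_of_abs_le hγ0 hγ1 fun t => abs_pmfExp_le (d t) f

/-- The `b`-terms form the telescoping series `∑ (γ^{t+1} b_{t+1} - γ^t b_t) = -b_0`. -/
lemma tsum_geometric_mul_add_telescope {a b : ℕ → ℝ} (ha : Summable fun t => γ ^ t * a t)
    (hb : Summable fun t => γ ^ t * b t) :
    ∑' t, γ ^ t * (a t + γ * b (t + 1) - b t) = ∑' t, γ ^ t * a t - b 0 := by
  have hb' : Summable fun t => γ ^ (t + 1) * b (t + 1) := (summable_nat_add_iff 1).mpr hb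
  calc ∑' t, γ ^ t * (a t + γ * b (t + 1) - b t)
      = ∑' t, (γ ^ t * a t + (γ ^ (t + 1) * b (t + 1) - γ ^ t * b t)) :=
        tsum_congr fun t => by ring
    _ = ∑' t, γ ^ t * a t + (∑' t, γ ^ (t + 1) * b (t + 1) - ∑' t, γ ^ t * b t) := by
        rw [ha.tsum_add (hb'.sub hb), hb'.tsum_sub hb]
    _ = ∑' t, γ ^ t * a t - b 0 := by
        rw [hb.tsum_eq_zero_add]
        ring

end Series

section MDP

variable {S A : Type*} (P : S → A → PMF S) (r : S → A → ℝ) (γ : ℝ) (π : S → PMF A)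

lemma stateDist_eq_bind_pure (μ : PMF S) :
    ∀ t, stateDist P π μ t = μ.bind fun s => stateDist P π (PMF.pure s) t
  | 0 => (PMF.bind_pure μ).symm
  | t + 1 => by
      rw [stateDist, stateDist_eq_bind_pure μ t, PMF.bind_bind]
      rfl

lemma pmfExp_stateDist_succ [Fintype S] [Fintype A] (μ : PMF S) (t : ℕ) (f : S → ℝ) :
    pmfExp (stateDist P π μ (t + 1)) f =
      pmfExp (stateDist P π μ t) fun x => pmfExp (π x) fun a => pmfExp (P x a) f := by
  simp only [stateDist, pmfExp_bind]

lemma pmfExp_adv [Fintype S] [Fintype A] (s : S) (π' : S → PMF A) :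
    pmfExp (π' s) (Adv P r γ π s) =
      pmfExp (π' s) (r s) + γ * pmfExp (π' s) (fun a => pmfExp (P s a) (Vval P r γ π)) -
        Vval P r γ π s := by
  rw [← pmfExp_const (π' s) (Vval P r γ π s), ← pmfExp_const_mul, ← pmfExp_add, ← pmfExp_sub]
  rfl

variable {γ}

lemma Jret_eq_tsum [Fintype S] [Fintype A] (hγ0 : 0 ≤ γ) (hγ1 : γ < 1) (μ : PMF S) :
    Jret P r γ π μ = ∑' t, γ ^ t * pmfExp (stateDist P π μ t) fun x => pmfExp (π x) (r x) := by
  set ρ : S → ℝ := fun x => pmfExp (π x) (r x)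
  have hsum (s : S) := (summable_geometric_mul_pmfExp hγ0 hγ1
    (stateDist P π (PMF.pure s)) ρ).mul_left (μ s).toReal
  calc Jret P r γ π μ
      = ∑ s, ∑' t, (μ s).toReal * (γ ^ t * pmfExp (stateDist P π (PMF.pure s) t) ρ) :=
        Finset.sum_congr rfl fun s _ => tsum_mul_left.symm
    _ = ∑' t, ∑ s, (μ s).toReal * (γ ^ t * pmfExp (stateDist P π (PMF.pure s) t) ρ) :=
        (Summable.tsum_finsetSum fun s _ => hsum s).symm
    _ = ∑' t, γ ^ t * pmfExp (stateDist P π μ t) ρ := by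
        refine tsum_congr fun t => ?_
        rw [stateDist_eq_bind_pure, pmfExp_bind, pmfExp, Finset.mul_sum]
        exact Finset.sum_congr rfl fun s _ => by ring

lemma sum_visit_mul [Fintype S] (hγ0 : 0 ≤ γ) (hγ1 : γ < 1) (μ : PMF S) (f : S → ℝ) :
    ∑ s, visit P π μ γ s * f s = (1 - γ) * ∑' t, γ ^ t * pmfExp (stateDist P π μ t) f := by
  have hsum (s : S) : Summable fun t => γ ^ t * ((stateDist P π μ t s).toReal * f s) :=
    summable_geometric_mul_of_abs_le hγ0 hγ1 fun t => by
      rw [abs_mul, abs_of_nonneg ENNReal.toReal_nonneg]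
      exact mul_le_of_le_one_left (abs_nonneg _) (PMF.toReal_apply_le_one _ s)
  calc ∑ s, visit P π μ γ s * f s
      = (1 - γ) * ∑ s, ∑' t, γ ^ t * ((stateDist P π μ t s).toReal * f s) := by
        rw [Finset.mul_sum]
        refine Finset.sum_congr rfl fun s _ => ?_
        rw [visit, mul_assoc, ← tsum_mul_right]
        exact congrArg _ (tsum_congr fun t => by ring)
    _ = (1 - γ) * ∑' t, γ ^ t * pmfExp (stateDist P π μ t) f := by
        rw [← Summable.tsum_finsetSum fun s _ => hsum s]
        simp only [pmfExp, Finset.mul_sum]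

end MDP

theorem perf_diff_visitation_general {S A : Type*} [Fintype S] [Fintype A]
    (P : S → A → PMF S) (r : S → A → ℝ) (γ : ℝ) (hγ0 : 0 ≤ γ) (hγ1 : γ < 1)
    (π π' : S → PMF A) (μ : PMF S) :
    Jret P r γ π' μ - Jret P r γ π μ =
      (1 / (1 - γ)) *
        ∑ s, visit P π' μ γ s * pmfExp (π' s) (fun a => Adv P r γ π s a) := by
  have hstep (t : ℕ) :
      (pmfExp (stateDist P π' μ t) fun s => pmfExp (π' s) fun a => Adv P r γ π s a) =
        (pmfExp (stateDist P π' μ t) fun x => pmfExp (π' x) (r x)) +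
          γ * pmfExp (stateDist P π' μ (t + 1)) (Vval P r γ π) -
          pmfExp (stateDist P π' μ t) (Vval P r γ π) := by
    simp only [pmfExp_adv, pmfExp_sub, pmfExp_add, pmfExp_const_mul, pmfExp_stateDist_succ]
  have hne : (1 : ℝ) - γ ≠ 0 := by linarith
  rw [sum_visit_mul P π' hγ0 hγ1, ← mul_assoc, one_div_mul_cancel hne, one_mul,
    tsum_congr fun t => by rw [hstep],
    tsum_geometric_mul_add_telescope (summable_geometric_mul_pmfExp hγ0 hγ1 _ _)
      (summable_geometric_mul_pmfExp hγ0 hγ1 _ _), ← Jret_eq_tsum P r π' hγ0 hγ1]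
  rfl

/-- Performance difference lemma, visitation form:
`J(π') − J(π) = (1/(1−γ)) E_{s ~ ν^{π',μ}} E_{a ~ π'(s)} [A^π(s,a)]`. -/
theorem perf_diff_visitation {S A : Type*} [Fintype S] [Nonempty S] [Fintype A] [Nonempty A]
    (P : S → A → PMF S) (r : S → A → ℝ) (γ : ℝ) (hγ0 : 0 ≤ γ) (hγ1 : γ < 1)
    (π π' : S → PMF A) (μ : PMF S) :
    Jret P r γ π' μ - Jret P r γ π μ =
      (1 / (1 - γ)) *
        ∑ s, visit P π' μ γ s * pmfExp (π' s) (fun a => Adv P r γ π s a) :=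
  perf_diff_visitation_general P r γ hγ0 hγ1 π π' μ
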